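/- arXiv:1511.08484 — 8 statements merged into one kernel-verified Lean document; each statement's English description precedes it below -/
import Mathlib

section
/- Let M be an increasing, logarithmically convex sequence of positive reals with M_0 = 1, and let h_M(t) = inf_{j≥0} t^j M_j for t > 0, h_M(0) = 0. Then M_j = sup_{t > 0} t^{-j} h_M(t) for every natural number j. -/
theorem stmt2 (M : ℕ → ℝ) (hpos : ∀ j, 0 < M j) (h0 : M 0 = 1)
    (hmono : Monotone M) (hlc : Monotone (fun j => M (j + 1) / M j))
    (h : ℝ → ℝ) (hdef : ∀ t : ℝ, h t = if t = 0 then 0 else ⨅ j : ℕ, t ^ j * M j) :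
    ∀ j : ℕ, M j = ⨆ t : Set.Ioi (0 : ℝ), ((t : ℝ) ^ j)⁻¹ * h t := by
  intro j
  set t0 : ℝ := M j / M (j + 1) with ht0def
  have hMj := hpos j
  have hMj1 := hpos (j + 1)
  have ht0pos : 0 < t0 := div_pos hMj hMj1
  have fpos : ∀ (t : ℝ), 0 < t → ∀ k, 0 < t ^ k * M k := fun t ht k =>
    mul_pos (pow_pos ht k) (hpos k)
  have hbdd : ∀ (t : ℝ), 0 < t → BddBelow (Set.range fun k : ℕ => t ^ k * M k) := by
    intro t ht
    exact ⟨0, by rintro x ⟨k, rfl⟩; exact (fpos t ht k).le⟩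
  have hle : ∀ (t : ℝ), 0 < t → ∀ k, h t ≤ t ^ k * M k := by
    intro t ht k
    rw [hdef, if_neg ht.ne']
    exact ciInf_le (hbdd t ht) k
  have hstep : ∀ k, t0 ^ (k + 1) * M (k + 1) = (t0 ^ k * M k) * (t0 * (M (k + 1) / M k)) := by
    intro k
    have := (hpos k).ne'
    field_simp
    ring
  have hrj : t0 * (M (j + 1) / M j) = 1 := by
    rw [ht0def]
    field_simp
  have key : ∀ k, t0 ^ j * M j ≤ t0 ^ k * M k := by
    intro k
    rcases le_total j k with hjk | hkj
    · induction k, hjk using Nat.le_induction with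
      | base => exact le_refl _
      | succ k hk ih =>
        refine ih.trans ?_
        rw [hstep]
        refine le_mul_of_one_le_right (fpos t0 ht0pos k).le ?_
        rw [← hrj]
        exact mul_le_mul_of_nonneg_left (hlc hk) ht0pos.le
    · have down : ∀ m, m ≤ j → t0 ^ j * M j ≤ t0 ^ (j - m) * M (j - m) := by
        intro m
        induction m with
        | zero => simp
        | succ m ih =>
          intro hm
          have hm' : m ≤ j := le_of_lt (Nat.lt_of_succ_le hm)
          refine (ih hm').trans ?_
          have hkk : j - m = (j - (m + 1)) + 1 := by omega
          rw [hkk, hstep]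
          refine mul_le_of_le_one_right (fpos t0 ht0pos _).le ?_
          rw [← hrj]
          exact mul_le_mul_of_nonneg_left (hlc (by omega)) ht0pos.le
      have := down (j - k) (by omega)
      rwa [Nat.sub_sub_self hkj] at this
  have ht0 : h t0 = t0 ^ j * M j := by
    refine le_antisymm (hle t0 ht0pos j) ?_
    rw [hdef, if_neg ht0pos.ne']
    exact le_ciInf key
  have hne : (t0 : ℝ) ^ j ≠ 0 := (pow_pos ht0pos j).ne'
  haveI : Nonempty (Set.Ioi (0 : ℝ)) := ⟨⟨1, by norm_num⟩⟩
  have hub : ∀ t : Set.Ioi (0 : ℝ), ((t : ℝ) ^ j)⁻¹ * h t ≤ M j := by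
    rintro ⟨t, ht⟩
    have ht' : (0 : ℝ) < t := ht
    have htne : (t : ℝ) ^ j ≠ 0 := (pow_pos ht' j).ne'
    calc ((t : ℝ) ^ j)⁻¹ * h t ≤ ((t : ℝ) ^ j)⁻¹ * (t ^ j * M j) :=
          mul_le_mul_of_nonneg_left (hle t ht' j) (inv_nonneg.mpr (pow_pos ht' j).le)
      _ = M j := by rw [inv_mul_cancel_left₀ htne]
  have hbddA : BddAbove (Set.range fun t : Set.Ioi (0 : ℝ) => ((t : ℝ) ^ j)⁻¹ * h t) :=
    ⟨M j, by rintro x ⟨t, rfl⟩; exact hub t⟩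
  refine le_antisymm ?_ (ciSup_le hub)
  have := le_ciSup hbddA (⟨t0, ht0pos⟩ : Set.Ioi (0 : ℝ))
  simpa [ht0, inv_mul_cancel_left₀ hne] using this
end

section
/- Let M be a sequence of positive reals with M_0 = 1, increasing, logarithmically convex, and of moderate growth with constant A (M_{j+k} ≤ A^{j+k} M_j M_k). Then for every real s ≥ 1 there exist constants A_1, A_2 > 0 such that A_1^{j+1}·(M_j)^s ≤ M_{⌊sj⌋} ≤ A_2^{j+1}·(M_j)^s for all j ∈ ℕ. -/
/-!
Log-convexity with `M 0 = 1` makes the geometric means `M p ^ (1 / p)` increasing in `p ≥ 1`,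
so `M n ≥ M j ^ (n / j)` for `j ≤ n`; moderate growth bounds `M (k * j)` by `A ^ (k ^ 2 * j) * M j ^ k`
and the ratio `M (j + 1) / M j` by `A ^ (j + 1) * M 1`. With `n = ⌊s j⌋` this gives the lower bound
up to one extra factor `M j ^ (1 / j) ≤ M (j + 1) / M j`, and, comparing `n` with `⌈s⌉ j`, the upper bound.
-/

noncomputable def seqRoot (M : ℕ → ℝ) (p : ℕ) : ℝ := M p ^ (p : ℝ)⁻¹

section

variable {M : ℕ → ℝ} {A : ℝ}

lemma seqRoot_nonneg (hpos : ∀ j, 0 < M j) (p : ℕ) : 0 ≤ seqRoot M p :=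
  Real.rpow_nonneg (hpos p).le _

lemma seqRoot_pow (hpos : ∀ j, 0 < M j) {p : ℕ} (hp : p ≠ 0) : seqRoot M p ^ p = M p :=
  Real.rpow_inv_natCast_pow (hpos p).le hp

lemma rpow_eq_seqRoot_rpow (hpos : ∀ j, 0 < M j) {p : ℕ} (hp : p ≠ 0) (s : ℝ) :
    M p ^ s = seqRoot M p ^ ((p : ℝ) * s) := by
  rw [seqRoot, ← Real.rpow_mul (hpos p).le, inv_mul_cancel_left₀ (Nat.cast_ne_zero.mpr hp)]

lemma one_le_seqRoot {p : ℕ} (h : 1 ≤ M p) : 1 ≤ seqRoot M p :=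
  Real.one_le_rpow h (by positivity)

lemma le_succ_div_pow (hpos : ∀ j, 0 < M j) (h0 : M 0 = 1)
    (hlc : Monotone fun j => M (j + 1) / M j) (p : ℕ) :
    M p ≤ (M (p + 1) / M p) ^ p := by
  induction p with
  | zero => simp [h0]
  | succ p ih =>
    have hr : 0 ≤ M (p + 1) / M p := (div_pos (hpos _) (hpos _)).le
    calc M (p + 1) = M p * (M (p + 1) / M p) := by rw [mul_div_cancel₀ _ (hpos p).ne']
      _ ≤ (M (p + 1) / M p) ^ p * (M (p + 1) / M p) := mul_le_mul_of_nonneg_right ih hr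
      _ = (M (p + 1) / M p) ^ (p + 1) := (pow_succ _ _).symm
      _ ≤ (M (p + 2) / M (p + 1)) ^ (p + 1) := pow_le_pow_left₀ hr (hlc p.le_succ) _

lemma seqRoot_le_succ_div (hpos : ∀ j, 0 < M j) (h0 : M 0 = 1)
    (hlc : Monotone fun j => M (j + 1) / M j) {p : ℕ} (hp : p ≠ 0) :
    seqRoot M p ≤ M (p + 1) / M p := by
  rw [seqRoot, Real.rpow_inv_le_iff_of_pos (hpos p).le (div_pos (hpos _) (hpos _)).le
    (by positivity), Real.rpow_natCast]
  exact le_succ_div_pow hpos h0 hlc p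

lemma pow_succ_le_succ_pow (hpos : ∀ j, 0 < M j) (h0 : M 0 = 1)
    (hlc : Monotone fun j => M (j + 1) / M j) (q : ℕ) :
    M q ^ (q + 1) ≤ M (q + 1) ^ q :=
  calc M q ^ (q + 1) = M q ^ q * M q := pow_succ _ _
    _ ≤ M q ^ q * (M (q + 1) / M q) ^ q :=
        mul_le_mul_of_nonneg_left (le_succ_div_pow hpos h0 hlc q) (pow_pos (hpos q) q).le
    _ = M (q + 1) ^ q := by rw [← mul_pow, mul_div_cancel₀ _ (hpos q).ne']

lemma seqRoot_le_seqRoot_succ (hpos : ∀ j, 0 < M j) (h0 : M 0 = 1)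
    (hlc : Monotone fun j => M (j + 1) / M j) {q : ℕ} (hq : q ≠ 0) :
    seqRoot M q ≤ seqRoot M (q + 1) := by
  refine (pow_le_pow_iff_left₀ (seqRoot_nonneg hpos q) (seqRoot_nonneg hpos (q + 1))
    (mul_ne_zero hq q.succ_ne_zero)).mp ?_
  calc seqRoot M q ^ (q * (q + 1)) = M q ^ (q + 1) := by rw [pow_mul, seqRoot_pow hpos hq]
    _ ≤ M (q + 1) ^ q := pow_succ_le_succ_pow hpos h0 hlc q
    _ = seqRoot M (q + 1) ^ (q * (q + 1)) := by
        rw [mul_comm, pow_mul, seqRoot_pow hpos q.succ_ne_zero]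

lemma seqRoot_mono (hpos : ∀ j, 0 < M j) (h0 : M 0 = 1)
    (hlc : Monotone fun j => M (j + 1) / M j) {p q : ℕ} (hp : p ≠ 0) (hpq : p ≤ q) :
    seqRoot M p ≤ seqRoot M q := by
  induction q, hpq using Nat.le_induction with
  | base => exact le_rfl
  | succ q hpq ih => exact ih.trans (seqRoot_le_seqRoot_succ hpos h0 hlc (by omega))

lemma one_le_of_moderateGrowth (hpos : ∀ j, 0 < M j) (h0 : M 0 = 1)
    (hmg : ∀ j k : ℕ, M (j + k) ≤ A ^ (j + k) * (M j * M k)) : 1 ≤ A := by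
  have h := hmg 1 0
  rw [h0, mul_one, pow_one] at h
  exact (le_mul_iff_one_le_left (hpos 1)).mp h

lemma succ_div_le_of_moderateGrowth (hpos : ∀ j, 0 < M j)
    (hmg : ∀ j k : ℕ, M (j + k) ≤ A ^ (j + k) * (M j * M k)) (j : ℕ) :
    M (j + 1) / M j ≤ A ^ (j + 1) * M 1 := by
  rw [div_le_iff₀ (hpos j)]
  linarith [hmg j 1]

lemma le_pow_mul_pow_of_moderateGrowth (hpos : ∀ j, 0 < M j) (h0 : M 0 = 1) (hA : 1 ≤ A)
    (hmg : ∀ j k : ℕ, M (j + k) ≤ A ^ (j + k) * (M j * M k)) (k j : ℕ) :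
    M (k * j) ≤ A ^ (k ^ 2 * j) * M j ^ k := by
  induction k with
  | zero => simp [h0]
  | succ k ih =>
    calc M ((k + 1) * j) = M (k * j + j) := by rw [add_one_mul]
      _ ≤ A ^ (k * j + j) * (M (k * j) * M j) := hmg _ _
      _ ≤ A ^ (k * j + j) * (A ^ (k ^ 2 * j) * M j ^ k * M j) := by
          gcongr
          exact (hpos j).le
      _ = A ^ (k ^ 2 * j + (k * j + j)) * M j ^ (k + 1) := by ring
      _ ≤ A ^ ((k + 1) ^ 2 * j) * M j ^ (k + 1) := by
          exact mul_le_mul_of_nonneg_right (pow_le_pow_right₀ hA (by nlinarith))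
            (pow_pos (hpos j) _).le

lemma seqRoot_mul_le (hpos : ∀ j, 0 < M j) (h0 : M 0 = 1) (hA : 1 ≤ A)
    (hmg : ∀ j k : ℕ, M (j + k) ≤ A ^ (j + k) * (M j * M k)) {k j : ℕ} (hk : k ≠ 0)
    (hj : j ≠ 0) : seqRoot M (k * j) ≤ A ^ k * seqRoot M j := by
  have hkj : k * j ≠ 0 := mul_ne_zero hk hj
  refine (pow_le_pow_iff_left₀ (seqRoot_nonneg hpos _)
    (mul_nonneg (by positivity) (seqRoot_nonneg hpos j)) hkj).mp ?_
  calc seqRoot M (k * j) ^ (k * j) = M (k * j) := seqRoot_pow hpos hkj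
    _ ≤ A ^ (k ^ 2 * j) * M j ^ k := le_pow_mul_pow_of_moderateGrowth hpos h0 hA hmg k j
    _ = A ^ (k ^ 2 * j) * (seqRoot M j ^ j) ^ k := by rw [seqRoot_pow hpos hj]
    _ = (A ^ k * seqRoot M j) ^ (k * j) := by ring

lemma rpow_le_mul_floor (hpos : ∀ j, 0 < M j) (h0 : M 0 = 1) (hmono : Monotone M)
    (hlc : Monotone fun j => M (j + 1) / M j)
    (hmg : ∀ j k : ℕ, M (j + k) ≤ A ^ (j + k) * (M j * M k)) {s : ℝ} (hs : 1 ≤ s) (j : ℕ) :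
    M j ^ s ≤ (A * M 1) ^ (j + 1) * M ⌊s * j⌋₊ := by
  have hM1 : 1 ≤ M 1 := h0 ▸ hmono zero_le_one
  have hA := one_le_of_moderateGrowth hpos h0 hmg
  rcases Nat.eq_zero_or_pos j with rfl | hj
  · simp [h0, one_le_mul_of_one_le_of_one_le hA hM1]
  set n := ⌊s * j⌋₊
  have hjn : j ≤ n := Nat.le_floor (by nlinarith)
  have hroot : 1 ≤ seqRoot M j := one_le_seqRoot (h0 ▸ hmono j.zero_le)
  have hroot_le : seqRoot M j ≤ (A * M 1) ^ (j + 1) :=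
    calc seqRoot M j ≤ M (j + 1) / M j := seqRoot_le_succ_div hpos h0 hlc hj.ne'
      _ ≤ A ^ (j + 1) * M 1 := succ_div_le_of_moderateGrowth hpos hmg j
      _ ≤ A ^ (j + 1) * M 1 ^ (j + 1) := by gcongr; exact le_self_pow₀ hM1 j.succ_ne_zero
      _ = (A * M 1) ^ (j + 1) := (mul_pow _ _ _).symm
  calc M j ^ s = seqRoot M j ^ ((j : ℝ) * s) := rpow_eq_seqRoot_rpow hpos hj.ne' s
    _ ≤ seqRoot M j ^ ((n + 1 : ℕ) : ℝ) := by
        refine Real.rpow_le_rpow_of_exponent_le hroot ?_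
        push_cast
        linarith [Nat.lt_floor_add_one (s * j)]
    _ = seqRoot M j ^ n * seqRoot M j := by rw [Real.rpow_natCast, pow_succ]
    _ ≤ seqRoot M n ^ n * (A * M 1) ^ (j + 1) :=
        mul_le_mul (pow_le_pow_left₀ (seqRoot_nonneg hpos j)
          (seqRoot_mono hpos h0 hlc hj.ne' hjn) n) hroot_le (seqRoot_nonneg hpos j)
          (pow_nonneg (seqRoot_nonneg hpos n) n)
    _ = (A * M 1) ^ (j + 1) * M n := by rw [seqRoot_pow hpos (by omega), mul_comm]

lemma floor_le_pow_mul_rpow (hpos : ∀ j, 0 < M j) (h0 : M 0 = 1) (hmono : Monotone M)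
    (hlc : Monotone fun j => M (j + 1) / M j)
    (hmg : ∀ j k : ℕ, M (j + k) ≤ A ^ (j + k) * (M j * M k)) {s : ℝ} (hs : 1 ≤ s) (j : ℕ) :
    M ⌊s * j⌋₊ ≤ (A ^ (⌈s⌉₊ ^ 2)) ^ (j + 1) * M j ^ s := by
  have hA := one_le_of_moderateGrowth hpos h0 hmg
  rcases Nat.eq_zero_or_pos j with rfl | hj
  · simpa [h0] using one_le_pow₀ hA
  set m := ⌈s⌉₊
  set n := ⌊s * j⌋₊
  have hm : m ≠ 0 := (Nat.ceil_pos.mpr (by linarith)).ne'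
  have hjn : j ≤ n := Nat.le_floor (by nlinarith)
  have hns : (n : ℝ) ≤ j * s := by rw [mul_comm]; exact Nat.floor_le (by positivity)
  have hnm : n ≤ m * j := Nat.floor_le_of_le (by push_cast; gcongr; exact Nat.le_ceil s)
  have hroot : 1 ≤ seqRoot M j := one_le_seqRoot (h0 ▸ hmono j.zero_le)
  calc M n = seqRoot M n ^ n := (seqRoot_pow hpos (by omega)).symm
    _ ≤ seqRoot M (m * j) ^ n :=
        pow_le_pow_left₀ (seqRoot_nonneg hpos n) (seqRoot_mono hpos h0 hlc (by omega) hnm) n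
    _ ≤ (A ^ m * seqRoot M j) ^ n :=
        pow_le_pow_left₀ (seqRoot_nonneg hpos _) (seqRoot_mul_le hpos h0 hA hmg hm hj.ne') n
    _ = A ^ (m * n) * seqRoot M j ^ (n : ℝ) := by rw [mul_pow, pow_mul, Real.rpow_natCast]
    _ ≤ A ^ (m * (m * j)) * seqRoot M j ^ ((j : ℝ) * s) :=
        mul_le_mul (pow_le_pow_right₀ hA (Nat.mul_le_mul_left m hnm))
          (Real.rpow_le_rpow_of_exponent_le hroot hns) (Real.rpow_nonneg (by linarith) _)
          (by positivity)
    _ = (A ^ (m ^ 2)) ^ j * M j ^ s := by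
        rw [← rpow_eq_seqRoot_rpow hpos hj.ne', ← pow_mul, sq, mul_assoc]
    _ ≤ (A ^ (m ^ 2)) ^ (j + 1) * M j ^ s := by
        have := (hpos j).le
        gcongr
        · exact one_le_pow₀ hA
        · exact j.le_succ

end

theorem stmt6_general (M : ℕ → ℝ) (hpos : ∀ j, 0 < M j) (h0 : M 0 = 1)
    (hmono : Monotone M) (hlc : Monotone (fun j => M (j + 1) / M j))
    (A : ℝ) (hmg : ∀ j k : ℕ, M (j + k) ≤ A ^ (j + k) * (M j * M k)) :
    ∀ s : ℝ, 1 ≤ s → ∃ A₁ A₂ : ℝ, 0 < A₁ ∧ 0 < A₂ ∧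
      ∀ j : ℕ, A₁ ^ (j + 1) * (M j) ^ s ≤ M ⌊s * j⌋₊ ∧
        M ⌊s * j⌋₊ ≤ A₂ ^ (j + 1) * (M j) ^ s := by
  intro s hs
  have hA : 0 < A := one_pos.trans_le (one_le_of_moderateGrowth hpos h0 hmg)
  have hAM : 0 < A * M 1 := mul_pos hA (hpos 1)
  refine ⟨(A * M 1)⁻¹, A ^ (⌈s⌉₊ ^ 2), inv_pos.mpr hAM, pow_pos hA _, fun j => ⟨?_, ?_⟩⟩
  · rw [inv_pow, inv_mul_le_iff₀ (pow_pos hAM _)]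
    exact rpow_le_mul_floor hpos h0 hmono hlc hmg hs j
  · exact floor_le_pow_mul_rpow hpos h0 hmono hlc hmg hs j

theorem stmt6 (M : ℕ → ℝ) (hpos : ∀ j, 0 < M j) (h0 : M 0 = 1)
    (hmono : Monotone M) (hlc : Monotone (fun j => M (j + 1) / M j))
    (A : ℝ) (hA : 0 < A) (hmg : ∀ j k : ℕ, M (j + k) ≤ A ^ (j + k) * (M j * M k)) :
    ∀ s : ℝ, 1 ≤ s → ∃ A₁ A₂ : ℝ, 0 < A₁ ∧ 0 < A₂ ∧
      ∀ j : ℕ, A₁ ^ (j + 1) * (M j) ^ s ≤ M ⌊s * j⌋₊ ∧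
        M ⌊s * j⌋₊ ≤ A₂ ^ (j + 1) * (M j) ^ s :=
  stmt6_general M hpos h0 hmono hlc A hmg
end

section
/- If M is a strongly regular sequence (increasing with M_0 = 1, logarithmically convex, of moderate growth, and strongly non-quasianalytic) and s ≥ 1 is a real number, then the sequence M^s defined by (M^s)_j = (M_j)^s is also strongly regular. -/
def StronglyRegular (M : ℕ → ℝ) : Prop :=
  (∀ j, 0 < M j) ∧ M 0 = 1 ∧ Monotone M ∧
    Monotone (fun j => M (j + 1) / M j) ∧
    (∃ A : ℝ, 0 < A ∧ ∀ j k : ℕ, M (j + k) ≤ A ^ (j + k) * (M j * M k)) ∧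
    (∃ A : ℝ, 0 < A ∧ ∀ k n : ℕ,
      ∑ j ∈ Finset.Ico k n, M j / ((j + 1 : ℝ) * M (j + 1)) ≤ A * (M k / M (k + 1)))

/-!
Every condition is preserved by `x ↦ x ^ s` because it is monotone and multiplicative on
positive reals. For strong non-quasianalyticity write `x_j = M_j / M_(j+1)`: by log-convexity
`x_j ≤ x_k` for `j ≥ k`, so `x_j ^ s ≤ x_k ^ (s - 1) * x_j`, and the sum for `M ^ s` is at most
`x_k ^ (s - 1)` times the sum for `M`, hence at most `A * x_k ^ s`.
-/

open Finset

namespace Real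

lemma rpow_le_rpow_sub_one_mul {x r s : ℝ} (hx : 0 ≤ x) (hxr : x ≤ r) (hs : 1 ≤ s) :
    x ^ s ≤ r ^ (s - 1) * x := by
  calc x ^ s = x ^ (s - 1) * x := by
        rw [← rpow_add_one' hx (by linarith), sub_add_cancel]
    _ ≤ r ^ (s - 1) * x := by gcongr

lemma sum_Ico_rpow_div_le {x : ℕ → ℝ} {s : ℝ} {k n : ℕ} (hx : ∀ j, 0 ≤ x j)
    (hxk : ∀ j ∈ Ico k n, x j ≤ x k) (hs : 1 ≤ s) :
    ∑ j ∈ Ico k n, x j ^ s / (j + 1) ≤ x k ^ (s - 1) * ∑ j ∈ Ico k n, x j / (j + 1) := by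
  rw [mul_sum]
  refine sum_le_sum fun j hj => ?_
  rw [← mul_div_assoc]
  gcongr
  exact rpow_le_rpow_sub_one_mul (hx j) (hxk j hj) hs

end Real

section PowerSequence

variable {M : ℕ → ℝ} {s : ℝ}

lemma antitone_div_succ_of_monotone_succ_div (hpos : ∀ j, 0 < M j)
    (hratio : Monotone fun j => M (j + 1) / M j) : Antitone fun j => M j / M (j + 1) := by
  intro k j hkj
  simpa only [one_div_div] using one_div_le_one_div_of_le (div_pos (hpos _) (hpos _)) (hratio hkj)

lemma monotone_rpow_succ_div_rpow (hpos : ∀ j, 0 < M j)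
    (hratio : Monotone fun j => M (j + 1) / M j) (hs : 0 ≤ s) :
    Monotone fun j => M (j + 1) ^ s / M j ^ s := by
  intro a b hab
  simp only [← Real.div_rpow (hpos _).le (hpos _).le]
  exact Real.rpow_le_rpow (div_pos (hpos _) (hpos _)).le (hratio hab) hs

lemma rpow_le_pow_mul_mul_rpow {A : ℝ} (hA : 0 < A) (hpos : ∀ j, 0 < M j) (hs : 0 ≤ s) {j k : ℕ}
    (hmod : M (j + k) ≤ A ^ (j + k) * (M j * M k)) :
    M (j + k) ^ s ≤ (A ^ s) ^ (j + k) * (M j ^ s * M k ^ s) := by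
  calc M (j + k) ^ s ≤ (A ^ (j + k) * (M j * M k)) ^ s := by
        gcongr; exact (hpos _).le
    _ = (A ^ s) ^ (j + k) * (M j ^ s * M k ^ s) := by
        rw [Real.mul_rpow (by positivity) (mul_nonneg (hpos _).le (hpos _).le),
          Real.mul_rpow (hpos _).le (hpos _).le, ← Real.rpow_natCast, ← Real.rpow_natCast,
          ← Real.rpow_mul hA.le, ← Real.rpow_mul hA.le, mul_comm s]

lemma sum_Ico_rpow_div_succ_mul_le (hpos : ∀ j, 0 < M j)
    (hratio : Monotone fun j => M (j + 1) / M j) (hs : 1 ≤ s) {A : ℝ} {k n : ℕ}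
    (hsnq : ∑ j ∈ Ico k n, M j / ((j + 1 : ℝ) * M (j + 1)) ≤ A * (M k / M (k + 1))) :
    ∑ j ∈ Ico k n, M j ^ s / ((j + 1 : ℝ) * M (j + 1) ^ s) ≤ A * (M k ^ s / M (k + 1) ^ s) := by
  set x : ℕ → ℝ := fun j => M j / M (j + 1)
  have hx : ∀ j, 0 ≤ x j := fun j => (div_pos (hpos _) (hpos _)).le
  have hxk : ∀ j ∈ Ico k n, x j ≤ x k := fun j hj =>
    antitone_div_succ_of_monotone_succ_div hpos hratio (mem_Ico.mp hj).1
  simp only [div_mul_eq_div_div_swap, ← Real.div_rpow (hpos _).le (hpos _).le] at hsnq ⊢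
  calc ∑ j ∈ Ico k n, x j ^ s / (j + 1)
      ≤ x k ^ (s - 1) * ∑ j ∈ Ico k n, x j / (j + 1) := Real.sum_Ico_rpow_div_le hx hxk hs
    _ ≤ x k ^ (s - 1) * (A * x k) := by have := hx k; gcongr
    _ = A * x k ^ s := by
        rw [mul_left_comm, ← Real.rpow_add_one' (hx k) (by linarith), sub_add_cancel]

end PowerSequence

theorem stmt7 (M : ℕ → ℝ) (hM : StronglyRegular M) (s : ℝ) (hs : 1 ≤ s) :
    StronglyRegular (fun j => (M j) ^ s) := by
  obtain ⟨hpos, h0, hmono, hratio, ⟨A, hA, hmod⟩, ⟨B, hB, hsnq⟩⟩ := hM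
  have hs0 : 0 ≤ s := zero_le_one.trans hs
  refine ⟨fun j => Real.rpow_pos_of_pos (hpos j) s, by simp [h0],
    fun a b hab => Real.rpow_le_rpow (hpos a).le (hmono hab) hs0,
    monotone_rpow_succ_div_rpow hpos hratio hs0,
    ⟨A ^ s, Real.rpow_pos_of_pos hA s, fun j k => rpow_le_pow_mul_mul_rpow hA hpos hs0 (hmod j k)⟩,
    ⟨B, hB, fun k n => sum_Ico_rpow_div_succ_mul_le hpos hratio hs (hsnq k n)⟩⟩
end

section
/- Let p ≥ 1 be an integer and δ > 0. For z ∈ ℂ with 0 < |z| ≤ δ, write z = r e^{iθ}, set φ = θ/p + π/(2p), and define ρ(z) = r^{1/p} · min_{0 ≤ k ≤ p−1} |sin(φ + kπ/p)| (the distance from the set of complex 2p-th roots parameters to ℝ for P(x,t)=x²+t^{2p}). Then ρ(z) ≥ (2 δ^{1/p})^{1−p} · d(z, iℝ), where d(z, iℝ) = |Re z| = r|cos θ|. In particular the Łojasiewicz exponent in the inequality ρ(z) ≥ c·d(z,Γ)^s can be taken s = 1 for P(x,t) = x² + t^{2p}. -/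
/-!
Write `φₖ = φ + kπ/p`. Since `p φₖ = θ + π/2 + kπ`, every factor satisfies
`|sin (p φₖ)| = |cos θ|`, and `|sin (p x)| ≤ p |sin x|` then gives `|sin φₖ| ≥ |cos θ| / p`.
It remains to compare constants: `2^{1-p} ≤ 1/p`, and since `1 - p ≤ 0` and `r ≤ δ`,
`(δ^{1/p})^{1-p} r ≤ (r^{1/p})^{1-p} r = r^{1/p}`.
-/

open Real

lemma abs_sin_nat_mul_le (n : ℕ) (x : ℝ) : |sin (n * x)| ≤ n * |sin x| := by
  induction n with
  | zero => simp
  | succ n ih =>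
    calc |sin ((n + 1 : ℕ) * x)| = |sin (n * x) * cos x + cos (n * x) * sin x| := by
          push_cast; rw [add_mul, one_mul, sin_add]
      _ ≤ |sin (n * x)| * |cos x| + |cos (n * x)| * |sin x| := by
          rw [← abs_mul, ← abs_mul]; exact abs_add_le _ _
      _ ≤ n * |sin x| * 1 + 1 * |sin x| := by
          gcongr
          exacts [abs_cos_le_one x, abs_cos_le_one _]
      _ = (n + 1 : ℕ) * |sin x| := by push_cast; ring

lemma abs_sin_add_nat_mul_pi (x : ℝ) (n : ℕ) : |sin (x + n * π)| = |sin x| := by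
  rw [sin_add_nat_mul_pi, abs_mul, abs_pow, abs_neg, abs_one, one_pow, one_mul]

lemma abs_cos_div_le_abs_sin_shift (p : ℕ) (hp : p ≠ 0) (θ : ℝ) (k : ℕ) :
    |cos θ| / p ≤ |sin (θ / p + π / (2 * p) + k * π / p)| := by
  have hmul : p * (θ / p + π / (2 * p) + k * π / p) = θ + π / 2 + k * π := by
    field_simp
  rw [div_le_iff₀ (by positivity), mul_comm]
  calc |cos θ| = |sin (p * (θ / p + π / (2 * p) + k * π / p))| := by
        rw [hmul, abs_sin_add_nat_mul_pi, sin_add_pi_div_two]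
    _ ≤ p * |sin (θ / p + π / (2 * p) + k * π / p)| := abs_sin_nat_mul_le _ _

lemma two_rpow_one_sub_le_one_div (p : ℕ) (hp : 1 ≤ p) : (2 : ℝ) ^ ((1 : ℝ) - p) ≤ 1 / p := by
  have hpow : (p : ℝ) ≤ 2 ^ (p - 1) := by
    have := Nat.lt_two_pow_self (n := p - 1)
    exact_mod_cast (show p ≤ 2 ^ (p - 1) by omega)
  have hexp : (1 : ℝ) - p = -((p - 1 : ℕ) : ℝ) := by push_cast [Nat.cast_sub hp]; ring
  rw [hexp, rpow_neg zero_le_two, rpow_natCast, one_div]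
  exact inv_anti₀ (by positivity) hpow

lemma rpow_one_div_rpow_one_sub_mul_self {r : ℝ} (hr : 0 < r) {p : ℝ} (hp : p ≠ 0) :
    (r ^ (1 / p)) ^ (1 - p) * r = r ^ (1 / p) := by
  rw [← rpow_mul hr.le, ← rpow_add_one hr.ne']
  congr 1
  field_simp
  ring

lemma two_mul_rpow_one_div_rpow_one_sub_mul_le (p : ℕ) (hp : 1 ≤ p) {r δ : ℝ} (hr : 0 < r)
    (hrδ : r ≤ δ) : (2 * δ ^ ((1 : ℝ) / p)) ^ ((1 : ℝ) - p) * r ≤ r ^ ((1 : ℝ) / p) / p := by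
  have hδ : 0 < δ := hr.trans_le hrδ
  have hp' : (1 : ℝ) ≤ p := by exact_mod_cast hp
  rw [mul_rpow zero_le_two (by positivity)]
  calc 2 ^ ((1 : ℝ) - p) * (δ ^ ((1 : ℝ) / p)) ^ ((1 : ℝ) - p) * r
      ≤ 1 / p * (r ^ ((1 : ℝ) / p)) ^ ((1 : ℝ) - p) * r := by
        refine mul_le_mul_of_nonneg_right (mul_le_mul (two_rpow_one_sub_le_one_div p hp) ?_
          (by positivity) (by positivity)) hr.le
        exact rpow_le_rpow_of_nonpos (by positivity) (rpow_le_rpow hr.le hrδ (by positivity))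
          (by linarith)
    _ = r ^ ((1 : ℝ) / p) / p := by
        rw [mul_assoc, rpow_one_div_rpow_one_sub_mul_self hr (by positivity)]
        ring

open Real in
theorem stmt11 (p : ℕ) (hp : 1 ≤ p) (δ : ℝ)
    (r θ : ℝ) (hr : 0 < r) (hrδ : r ≤ δ)
    (φ : ℝ) (hφ : φ = θ / p + π / (2 * p))
    (ρ : ℝ)
    (hρ : ρ = r ^ ((1 : ℝ) / p) *
      (Finset.range p).inf' (Finset.nonempty_range_iff.mpr (by omega))
        (fun k => |Real.sin (φ + k * π / p)|)) :
    (2 * δ ^ ((1 : ℝ) / p)) ^ ((1 : ℝ) - p) * (r * |Real.cos θ|) ≤ ρ := by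
  subst hφ hρ
  have hsin : |cos θ| / p ≤ (Finset.range p).inf' (Finset.nonempty_range_iff.mpr (by omega))
      (fun k => |sin (θ / p + π / (2 * p) + k * π / p)|) :=
    Finset.le_inf' _ _ fun k _ => abs_cos_div_le_abs_sin_shift p (by omega) θ k
  calc (2 * δ ^ ((1 : ℝ) / p)) ^ ((1 : ℝ) - p) * (r * |cos θ|)
      = (2 * δ ^ ((1 : ℝ) / p)) ^ ((1 : ℝ) - p) * r * |cos θ| := by ring
    _ ≤ r ^ ((1 : ℝ) / p) / p * |cos θ| := by
        gcongr
        exact two_mul_rpow_one_div_rpow_one_sub_mul_le p hp hr hrδ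
    _ = r ^ ((1 : ℝ) / p) * (|cos θ| / p) := by ring
    _ ≤ _ := by gcongr
end

section
/- Let d ≥ 2 be an integer. For z = r e^{iθ} with r > 0 and θ ∈ [0, 2π), define ρ(z) = r^{d/2} |sin(dθ/2)| and let Γ = ⋃_{k=0}^{d−1} {λ e^{2πik/d} : 0 ≤ λ ≤ λ_0} for some λ_0 > 0. Then ρ(z) ≥ (d/π)^{d/2} · d(z, Γ)^{d/2} for all z with |z| ≤ λ_0. -/
/-!
Write `θ = 2πk/d + δ` with `k` the nearest integer, so `|δ| ≤ π/d`. The point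
`r e^{2πik/d}` lies on `Γ` at distance at most `r|δ|` from `r e^{iθ}`, while
`|sin(dθ/2)| = |sin(dδ/2)| ≥ (d/π)|δ|` by Jordan's inequality. Since `(d/π)|δ| ≤ 1` and
`d/2 ≥ 1`, raising to the power `d/2` only weakens the left-hand side further.
-/

open Real Complex

lemma norm_exp_I_mul_sub_exp_I_mul_le (a b : ℝ) :
    ‖exp (I * a) - exp (I * b)‖ ≤ |a - b| := by
  have hfactor : exp (I * a) - exp (I * b) = exp (I * b) * (exp (I * (a - b : ℝ)) - 1) := by
    rw [mul_sub, mul_one, ← Complex.exp_add]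
    push_cast
    ring_nf
  rw [hfactor, norm_mul, norm_exp_I_mul_ofReal, one_mul]
  exact Real.norm_exp_I_mul_ofReal_sub_one_le

lemma dist_ofReal_mul_exp_I_mul_le {r : ℝ} (hr : 0 ≤ r) (a b : ℝ) :
    dist ((r : ℂ) * exp (I * a)) (r * exp (I * b)) ≤ r * |a - b| := by
  rw [dist_eq_norm, ← mul_sub, norm_mul, norm_real, Real.norm_of_nonneg hr]
  exact mul_le_mul_of_nonneg_left (norm_exp_I_mul_sub_exp_I_mul_le a b) hr

lemma exists_int_abs_sub_two_pi_mul_div_le (θ : ℝ) {d : ℝ} (hd : 0 < d) :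
    ∃ k : ℤ, |θ - 2 * π * k / d| ≤ π / d := by
  refine ⟨round (d * θ / (2 * π)), ?_⟩
  have hscale : θ - 2 * π * round (d * θ / (2 * π)) / d
      = 2 * π / d * (d * θ / (2 * π) - round (d * θ / (2 * π))) := by
    field_simp
  rw [hscale, abs_mul, abs_of_pos (by positivity)]
  calc 2 * π / d * |d * θ / (2 * π) - round (d * θ / (2 * π))| ≤ 2 * π / d * (1 / 2) :=
        mul_le_mul_of_nonneg_left (abs_sub_round _) (by positivity)
    _ = π / d := by ring

lemma exists_mem_range_exp_two_pi_mul_I_div_eq {d : ℕ} (hd : 0 < d) (k : ℤ) :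
    ∃ j ∈ Finset.range d, exp (2 * π * I * k / d) = exp (2 * π * I * j / d) := by
  have hdZ : (0 : ℤ) < d := by exact_mod_cast hd
  obtain ⟨j, hj⟩ : ∃ j : ℕ, (j : ℤ) = k % d := ⟨_, Int.toNat_of_nonneg (Int.emod_nonneg k hdZ.ne')⟩
  refine ⟨j, ?_, ?_⟩
  · rw [Finset.mem_range, ← Int.ofNat_lt, hj]
    exact Int.emod_lt_of_pos k hdZ
  · rw [exp_eq_exp_iff_exists_int]
    refine ⟨k / d, ?_⟩
    have hdiv : (k : ℂ) = d * (k / d : ℤ) + j := by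
      rw [← Int.cast_natCast j, hj]
      exact_mod_cast (Int.mul_ediv_add_emod k d).symm
    have hdC : (d : ℂ) ≠ 0 := by exact_mod_cast hd.ne'
    rw [hdiv]
    field_simp
    ring

lemma abs_sin_add_int_mul_pi (x : ℝ) (k : ℤ) : |Real.sin (x + k * π)| = |Real.sin x| := by
  rw [sin_add_int_mul_pi, abs_mul, abs_neg_one_zpow, one_mul]

/-- Jordan's inequality `|sin u| ≥ (2/π)|u|` at `u = dδ/2`, transported to `dθ/2 = dδ/2 + kπ`. -/
lemma div_pi_mul_abs_le_abs_sin_mul_div_two {d : ℝ} (hd : 0 < d) (θ : ℝ) {k : ℤ}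
    (hk : |θ - 2 * π * k / d| ≤ π / d) :
    d / π * |θ - 2 * π * k / d| ≤ |Real.sin (d * θ / 2)| := by
  set δ := θ - 2 * π * k / d
  have hshift : d * θ / 2 = d * δ / 2 + k * π := by
    simp only [δ]
    field_simp
    ring
  have habs : |d * δ / 2| = d / 2 * |δ| := by
    rw [mul_div_right_comm, abs_mul, abs_of_pos (by positivity)]
  have hjordan : |d * δ / 2| ≤ π / 2 := by
    rw [habs]
    calc d / 2 * |δ| ≤ d / 2 * (π / d) := mul_le_mul_of_nonneg_left hk (by positivity)
      _ = π / 2 := by field_simp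
  calc d / π * |δ| = 2 / π * |d * δ / 2| := by rw [habs]; field_simp
    _ ≤ |Real.sin (d * θ / 2)| := by
      rw [hshift, abs_sin_add_int_mul_pi]
      exact mul_abs_le_abs_sin hjordan

lemma rpow_mul_rpow_le_of_mul_le {p a D r x s : ℝ} (hp : 1 ≤ p) (ha : 0 ≤ a) (hD : 0 ≤ D)
    (hr : 0 ≤ r) (hx : 0 ≤ x) (hx1 : x ≤ 1) (hxs : x ≤ s) (h : a * D ≤ r * x) :
    a ^ p * D ^ p ≤ r ^ p * s :=
  calc a ^ p * D ^ p = (a * D) ^ p := (mul_rpow ha hD).symm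
    _ ≤ (r * x) ^ p := rpow_le_rpow (by positivity) h (by positivity)
    _ = r ^ p * x ^ p := mul_rpow hr hx
    _ ≤ r ^ p * s := mul_le_mul_of_nonneg_left
        ((rpow_le_self_of_le_one hx hx1 hp).trans hxs) (by positivity)

open Real Complex in
theorem stmt13_general (d : ℕ) (hd : 2 ≤ d) (lam0 : ℝ)
    (Γ : Set ℂ)
    (hΓ : Γ = ⋃ k ∈ Finset.range d,
      {w : ℂ | ∃ lam : ℝ, 0 ≤ lam ∧ lam ≤ lam0 ∧
        w = (lam : ℂ) * Complex.exp (2 * π * Complex.I * k / d)}) :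
    ∀ r θ : ℝ, 0 ≤ r → r ≤ lam0 →
      ((d : ℝ) / π) ^ ((d : ℝ) / 2) *
          (Metric.infDist ((r : ℂ) * Complex.exp (Complex.I * θ)) Γ) ^ ((d : ℝ) / 2) ≤
        r ^ ((d : ℝ) / 2) * |Real.sin (d * θ / 2)| := by
  intro r θ hr hrl
  have hdR : (2 : ℝ) ≤ d := by exact_mod_cast hd
  have hd0 : (0 : ℝ) < d := by linarith
  obtain ⟨k, hk⟩ := exists_int_abs_sub_two_pi_mul_div_le θ hd0
  obtain ⟨j, hj, hroot⟩ := exists_mem_range_exp_two_pi_mul_I_div_eq (d := d) (by omega) k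
  have hmem : (r : ℂ) * exp (I * (2 * π * k / d : ℝ)) ∈ Γ := by
    rw [hΓ, Set.mem_iUnion₂]
    refine ⟨j, hj, r, hr, hrl, ?_⟩
    rw [← hroot]
    push_cast
    ring_nf
  have hdist : Metric.infDist ((r : ℂ) * exp (I * θ)) Γ ≤ r * |θ - 2 * π * k / d| :=
    (Metric.infDist_le_dist_of_mem hmem).trans (dist_ofReal_mul_exp_I_mul_le hr _ _)
  have hδ1 : d / π * |θ - 2 * π * k / d| ≤ 1 := by
    calc d / π * |θ - 2 * π * k / d| ≤ d / π * (π / d) :=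
          mul_le_mul_of_nonneg_left hk (by positivity)
      _ = 1 := by field_simp
  refine rpow_mul_rpow_le_of_mul_le (by linarith) (by positivity) Metric.infDist_nonneg hr
    (by positivity) hδ1 (div_pi_mul_abs_le_abs_sin_mul_div_two hd0 θ hk) ?_
  calc d / π * Metric.infDist _ Γ ≤ d / π * (r * |θ - 2 * π * k / d|) :=
        mul_le_mul_of_nonneg_left hdist (by positivity)
    _ = r * (d / π * |θ - 2 * π * k / d|) := by ring

open Real Complex in
theorem stmt13 (d : ℕ) (hd : 2 ≤ d) (lam0 : ℝ) (hlam0 : 0 < lam0)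
    (Γ : Set ℂ)
    (hΓ : Γ = ⋃ k ∈ Finset.range d,
      {w : ℂ | ∃ lam : ℝ, 0 ≤ lam ∧ lam ≤ lam0 ∧
        w = (lam : ℂ) * Complex.exp (2 * π * Complex.I * k / d)}) :
    ∀ r θ : ℝ, 0 ≤ r → r ≤ lam0 →
      ((d : ℝ) / π) ^ ((d : ℝ) / 2) *
          (Metric.infDist ((r : ℂ) * Complex.exp (Complex.I * θ)) Γ) ^ ((d : ℝ) / 2) ≤
        r ^ ((d : ℝ) / 2) * |Real.sin (d * θ / 2)| :=
  stmt13_general d hd lam0 Γ hΓ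
end

section
/- Let d ≥ 2 and let Γ = ⋃_{k=0}^{d−1} {λ e^{2πik/d} : 0 ≤ λ ≤ λ_0}. If s ≥ 1 and c > 0 satisfy r^{d/2}|sin(dθ/2)| ≥ c · d(re^{iθ}, Γ)^s for all sufficiently small r > 0 and all θ, then s ≥ d/2. (Test with θ = π/d: then the left side is r^{d/2} and d(z,Γ) = r sin(π/d).) -/
/-!
At `z = r e^{iπ/d}` the left side equals `r^{d/2}`, while `z` makes an angle of at least `π/d`
with every ray of `Γ`, so `d(z, Γ) ≥ r sin(π/d)`. Hence `c sin(π/d)^s r^s ≤ r^{d/2}` for all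
small `r > 0`, which forces `s ≥ d/2`.
-/

open Real Filter Topology

lemma le_of_eventually_mul_rpow_le_rpow {C s t : ℝ} (hC : 0 < C)
    (h : ∀ᶠ r in 𝓝[>] 0, C * r ^ s ≤ r ^ t) : t ≤ s := by
  by_contra! hst
  have hsmall : ∀ᶠ r in 𝓝[>] (0 : ℝ), r ^ (t - s) < C := by
    have hcont := Real.continuousAt_rpow_const 0 (t - s) (.inr (sub_pos.2 hst).le)
    rw [ContinuousAt, zero_rpow (sub_pos.2 hst).ne'] at hcont
    exact nhdsWithin_le_nhds (hcont.eventually (gt_mem_nhds hC))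
  obtain ⟨r, hr, hsmall, hr0 : 0 < r⟩ := (h.and (hsmall.and self_mem_nhdsWithin)).exists
  rw [show t = (t - s) + s by ring, rpow_add hr0] at hr
  nlinarith [rpow_pos_of_pos hr0 s]

lemma mul_sin_le_norm_sub_ray {r l θ φ α : ℝ} (hr : 0 ≤ r) (hl : 0 ≤ l)
    (hcos : cos (θ - φ) ≤ cos α) :
    r * sin α ≤ ‖(r : ℂ) * Complex.exp (θ * Complex.I) - l * Complex.exp (φ * Complex.I)‖ := by
  have hsq : ‖(r : ℂ) * Complex.exp (θ * Complex.I) - l * Complex.exp (φ * Complex.I)‖ ^ 2 =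
      r ^ 2 + l ^ 2 - 2 * r * l * cos (θ - φ) := by
    rw [Complex.sq_norm, Complex.normSq_apply]
    simp only [Complex.sub_re, Complex.sub_im, Complex.re_ofReal_mul, Complex.im_ofReal_mul,
      Complex.exp_ofReal_mul_I_re, Complex.exp_ofReal_mul_I_im, cos_sub]
    nlinarith [sin_sq_add_cos_sq θ, sin_sq_add_cos_sq φ]
  refine abs_le_of_sq_le_sq' ?_ (norm_nonneg _) |>.2
  calc (r * sin α) ^ 2 ≤ (l - r * cos α) ^ 2 + (r * sin α) ^ 2 := by nlinarith
    _ = r ^ 2 + l ^ 2 - 2 * r * l * cos α := by nlinarith [sin_sq_add_cos_sq α]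
    _ ≤ _ := by rw [hsq]; nlinarith [mul_nonneg hr hl]

lemma cos_pi_div_sub_le (d k : ℕ) (hk : k ≤ d) :
    cos (π / d - 2 * π * k / d) ≤ cos (π / d) := by
  rcases Nat.eq_zero_or_pos k with rfl | hk1
  · simp
  have hd : (0 : ℝ) < d := by exact_mod_cast hk1.trans_le hk
  have hkd : (k : ℝ) ≤ d := by exact_mod_cast hk
  have hk1' : (1 : ℝ) ≤ k := by exact_mod_cast hk1
  have h₁ : 0 ≤ sin (k * π / d) := sin_nonneg_of_nonneg_of_le_pi (by positivity) (by
    rw [div_le_iff₀ hd]; nlinarith [pi_pos])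
  have h₂ : 0 ≤ sin ((k - 1) * π / d) := sin_nonneg_of_nonneg_of_le_pi
    (div_nonneg (mul_nonneg (by linarith) pi_pos.le) hd.le) (by
    rw [div_le_iff₀ hd]; nlinarith [pi_pos])
  -- `cos (π / d) - cos (π / d - 2kπ / d) = 2 sin (kπ / d) sin ((k - 1)π / d)`
  have := cos_sub_cos (π / d) (π / d - 2 * π * k / d)
  rw [show (π / d + (π / d - 2 * π * k / d)) / 2 = -((k - 1) * π / d) by ring,
    show (π / d - (π / d - 2 * π * k / d)) / 2 = k * π / d by ring, sin_neg] at this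
  nlinarith [mul_nonneg h₁ h₂]

lemma mul_sin_pi_div_le_infDist_star {d : ℕ} (hd : 0 < d) {lam0 r : ℝ} (hlam0 : 0 ≤ lam0)
    (hr : 0 ≤ r) :
    r * sin (π / d) ≤ Metric.infDist ((r : ℂ) * Complex.exp (Complex.I * (π / d : ℝ)))
      (⋃ k ∈ Finset.range d, {w : ℂ | ∃ lam : ℝ, 0 ≤ lam ∧ lam ≤ lam0 ∧
        w = (lam : ℂ) * Complex.exp (2 * π * Complex.I * k / d)}) := by
  simp only [Finset.mem_range]
  have h0 : (0 : ℂ) ∈ ⋃ k, ⋃ (_ : k < d), {w : ℂ | ∃ lam : ℝ, 0 ≤ lam ∧ lam ≤ lam0 ∧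
      w = (lam : ℂ) * Complex.exp (2 * π * Complex.I * k / d)} :=
    Set.mem_iUnion₂.2 ⟨0, hd, by exact ⟨0, le_rfl, hlam0, by simp⟩⟩
  refine (Metric.le_infDist ⟨0, h0⟩).2 ?_
  simp only [Set.mem_iUnion, Set.mem_ofPred_eq]
  rintro _ ⟨k, hk, lam, hlam, -, rfl⟩
  have hray : Complex.exp (2 * π * Complex.I * k / d) =
      Complex.exp (((2 * π * k / d : ℝ)) * Complex.I) := by
    push_cast; ring_nf
  rw [Complex.dist_eq, hray, mul_comm Complex.I]
  exact mul_sin_le_norm_sub_ray hr hlam (cos_pi_div_sub_le d k hk.le)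

open Real in
theorem stmt14_general (d : ℕ) (hd : 2 ≤ d) (lam0 : ℝ) (hlam0 : 0 < lam0)
    (Γ : Set ℂ)
    (hΓ : Γ = ⋃ k ∈ Finset.range d,
      {w : ℂ | ∃ lam : ℝ, 0 ≤ lam ∧ lam ≤ lam0 ∧
        w = (lam : ℂ) * Complex.exp (2 * π * Complex.I * k / d)})
    (s c r₀ : ℝ) (hs : 1 ≤ s) (hc : 0 < c) (hr₀ : 0 < r₀)
    (h : ∀ r θ : ℝ, 0 < r → r ≤ r₀ →
      c * (Metric.infDist ((r : ℂ) * Complex.exp (Complex.I * θ)) Γ) ^ s ≤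
        r ^ ((d : ℝ) / 2) * |Real.sin (d * θ / 2)|) :
    (d : ℝ) / 2 ≤ s := by
  have hd0 : (0 : ℝ) < d := by positivity
  have hsin : 0 < sin (π / d) := sin_pos_of_pos_of_lt_pi (by positivity) (by
    rw [div_lt_iff₀ hd0]; nlinarith [pi_pos, (show (2 : ℝ) ≤ d by exact_mod_cast hd)])
  refine le_of_eventually_mul_rpow_le_rpow (C := c * sin (π / d) ^ s) (by positivity) ?_
  filter_upwards [Ioc_mem_nhdsGT hr₀] with r ⟨hr, hrr⟩
  calc c * sin (π / d) ^ s * r ^ s = c * (r * sin (π / d)) ^ s := by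
        rw [mul_rpow hr.le hsin.le]; ring
    _ ≤ c * Metric.infDist ((r : ℂ) * Complex.exp (Complex.I * (π / d : ℝ))) Γ ^ s := by
        rw [hΓ]
        gcongr
        exact mul_sin_pi_div_le_infDist_star (by omega) hlam0.le hr.le
    _ ≤ r ^ ((d : ℝ) / 2) * |sin (d * (π / d) / 2)| := h r (π / d) hr hrr
    _ = r ^ ((d : ℝ) / 2) := by
        rw [show (d : ℝ) * (π / d) / 2 = π / 2 by field_simp, sin_pi_div_two, abs_one, mul_one]

open Real in
theorem stmt14 (d : ℕ) (hd : 2 ≤ d) (lam0 : ℝ) (hlam0 : 0 < lam0)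
    (Γ : Set ℂ)
    (hΓ : Γ = ⋃ k ∈ Finset.range d,
      {w : ℂ | ∃ lam : ℝ, 0 ≤ lam ∧ lam ≤ lam0 ∧
        w = (lam : ℂ) * Complex.exp (2 * π * Complex.I * k / d)})
    (s c r₀ : ℝ) (hs : 1 ≤ s) (hc : 0 < c) (hr₀ : 0 < r₀) (hr₀lam : r₀ ≤ lam0)
    (h : ∀ r θ : ℝ, 0 < r → r ≤ r₀ →
      c * (Metric.infDist ((r : ℂ) * Complex.exp (Complex.I * θ)) Γ) ^ s ≤
        r ^ ((d : ℝ) / 2) * |Real.sin (d * θ / 2)|) :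
    (d : ℝ) / 2 ≤ s :=
  stmt14_general d hd lam0 hlam0 Γ hΓ s c r₀ hs hc hr₀ h
end

section
/- Let M, N be sequences of positive reals with N satisfying M_0-normalization, log-convexity and moderate growth, and let d ≥ 2. Suppose there exist constants C, C' > 0 such that M_{dk} ≤ C^{k+1} N_{2k} for all k ∈ ℕ, and that M satisfies moderate growth and the two-sided estimate A_1^{j+1}(M_j)^s ≤ M_{⌊sj⌋} ≤ A_2^{j+1}(M_j)^s for all s ≥ 1. Then there exists C_1 > 0 with N_k ≥ C_1^{k+1} (M_k)^{d/2} for all k ∈ ℕ. -/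
/-!
Raising `M_{2m} ≤ A^{m+1} M_m^2` to the power `d/2` and combining it with
`M_m^d ≲ M_{dm} ≲ N_{2m}` bounds `M_{2m}^{d/2}` by `N_{2m}` up to a geometric factor.
Moderate growth of `M` and monotonicity of `N` pass from the even indices to all indices.
-/

def GeomLE (a b : ℕ → ℝ) : Prop :=
  ∃ G : ℝ, 0 < G ∧ ∀ k, a k ≤ G ^ (k + 1) * b k

def ModerateGrowth (M : ℕ → ℝ) : Prop :=
  ∃ A : ℝ, 0 < A ∧ ∀ j k : ℕ, M (j + k) ≤ A ^ (j + k) * (M j * M k)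

def FloorPowComparable (M : ℕ → ℝ) : Prop :=
  ∀ s : ℝ, 1 ≤ s → ∃ A₁ A₂ : ℝ, 0 < A₁ ∧ 0 < A₂ ∧
    ∀ j : ℕ, A₁ ^ (j + 1) * (M j) ^ s ≤ M ⌊s * j⌋₊ ∧ M ⌊s * j⌋₊ ≤ A₂ ^ (j + 1) * (M j) ^ s

namespace GeomLE

variable {a b c : ℕ → ℝ}

theorem of_le (h : ∀ k, a k ≤ b k) : GeomLE a b :=
  ⟨1, one_pos, fun k => by simpa using h k⟩

theorem trans (hab : GeomLE a b) (hbc : GeomLE b c) : GeomLE a c := by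
  obtain ⟨G, hG, hab⟩ := hab
  obtain ⟨H, hH, hbc⟩ := hbc
  refine ⟨G * H, by positivity, fun k => ?_⟩
  calc a k ≤ G ^ (k + 1) * b k := hab k
    _ ≤ G ^ (k + 1) * (H ^ (k + 1) * c k) := by gcongr; exact hbc k
    _ = (G * H) ^ (k + 1) * c k := by ring

theorem rpow (hab : GeomLE a b) (ha : ∀ k, 0 ≤ a k) {r : ℝ} (hr : 0 ≤ r) :
    GeomLE (fun k => a k ^ r) (fun k => b k ^ r) := by
  obtain ⟨G, hG, hab⟩ := hab
  refine ⟨G ^ r, by positivity, fun k => ?_⟩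
  have hb : 0 ≤ b k := nonneg_of_mul_nonneg_right ((ha k).trans (hab k)) (by positivity)
  calc a k ^ r ≤ (G ^ (k + 1) * b k) ^ r := Real.rpow_le_rpow (ha k) (hab k) hr
    _ = (G ^ r) ^ (k + 1) * b k ^ r := by
      rw [Real.mul_rpow (by positivity) hb, Real.rpow_pow_comm hG.le]

theorem comp (hab : GeomLE a b) (hb : ∀ k, 0 ≤ b k) {f : ℕ → ℕ} (hf : ∀ k, f k ≤ k) :
    GeomLE (fun k => a (f k)) (fun k => b (f k)) := by
  obtain ⟨G, hG, hab⟩ := hab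
  refine ⟨max G 1, by positivity, fun k => (hab (f k)).trans ?_⟩
  refine mul_le_mul_of_nonneg_right ?_ (hb _)
  calc G ^ (f k + 1) ≤ max G 1 ^ (f k + 1) := pow_le_pow_left₀ hG.le (le_max_left _ _) _
    _ ≤ max G 1 ^ (k + 1) := pow_le_pow_right₀ (le_max_right _ _) (Nat.succ_le_succ (hf k))

theorem exists_mul_pow_le (h : GeomLE a b) : ∃ C : ℝ, 0 < C ∧ ∀ k, C ^ (k + 1) * a k ≤ b k := by
  obtain ⟨G, hG, h⟩ := h
  refine ⟨G⁻¹, inv_pos.2 hG, fun k => ?_⟩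
  rw [inv_pow, inv_mul_le_iff₀ (by positivity)]
  exact h k

end GeomLE

variable {M N : ℕ → ℝ}

theorem ModerateGrowth.geomLE_mul_div (hM : ModerateGrowth M) (hpos : ∀ j, 0 < M j)
    {p : ℕ} (hp : 0 < p) : GeomLE M (fun k => M (p * (k / p))) := by
  obtain ⟨A, hA, hM⟩ := hM
  set K := ∑ r ∈ Finset.range p, M r
  have hK : ∀ r < p, M r ≤ K := fun r hr =>
    Finset.single_le_sum (fun i _ => (hpos i).le) (Finset.mem_range.2 hr)
  refine ⟨max A 1 * max K 1, by positivity, fun k => ?_⟩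
  have hsplit := hM (p * (k / p)) (k % p)
  rw [Nat.div_add_mod k p] at hsplit
  have hApow : A ^ k ≤ max A 1 ^ (k + 1) :=
    (pow_le_pow_left₀ hA.le (le_max_left _ _) _).trans
      (pow_le_pow_right₀ (le_max_right _ _) k.le_succ)
  have hKpow : M (k % p) ≤ max K 1 ^ (k + 1) :=
    ((hK _ (Nat.mod_lt k hp)).trans (le_max_left _ _)).trans
      (le_self_pow₀ (le_max_right _ _) k.succ_ne_zero)
  calc M k ≤ A ^ k * (M (p * (k / p)) * M (k % p)) := hsplit
    _ ≤ max A 1 ^ (k + 1) * (M (p * (k / p)) * max K 1 ^ (k + 1)) := by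
      have := hpos (p * (k / p))
      have := hpos (k % p)
      gcongr
    _ = (max A 1 * max K 1) ^ (k + 1) * M (p * (k / p)) := by ring

theorem FloorPowComparable.geomLE_mul_pow (hM : FloorPowComparable M) {n : ℕ} (hn : 1 ≤ n) :
    GeomLE (fun j => M (n * j)) (fun j => M j ^ n) := by
  obtain ⟨_, A₂, _, hA₂, h⟩ := hM n (by exact_mod_cast hn)
  refine ⟨A₂, hA₂, fun j => ?_⟩
  simpa [← Nat.cast_mul, Nat.floor_natCast] using (h j).2

theorem FloorPowComparable.geomLE_pow_mul (hM : FloorPowComparable M) {n : ℕ} (hn : 1 ≤ n) :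
    GeomLE (fun j => M j ^ n) (fun j => M (n * j)) := by
  obtain ⟨A₁, _, hA₁, _, h⟩ := hM n (by exact_mod_cast hn)
  refine ⟨A₁⁻¹, inv_pos.2 hA₁, fun j => ?_⟩
  rw [inv_pow, le_inv_mul_iff₀ (by positivity)]
  simpa [← Nat.cast_mul, Nat.floor_natCast] using (h j).1

theorem FloorPowComparable.geomLE_rpow_of_geomLE_mul (hM : FloorPowComparable M)
    (hpos : ∀ j, 0 < M j) {p d : ℕ} (hp : 1 ≤ p) (hd : 1 ≤ d)
    (hMN : GeomLE (fun k => M (d * k)) (fun k => N (p * k))) :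
    GeomLE (fun m => M (p * m) ^ ((d : ℝ) / p)) (fun m => N (p * m)) := by
  have hroot : GeomLE (fun m => M (p * m) ^ ((d : ℝ) / p)) (fun m => M m ^ d) := by
    convert (hM.geomLE_mul_pow hp).rpow (fun _ => (hpos _).le) (r := (d : ℝ) / p) (by positivity)
      using 2 with m
    rw [← Real.rpow_natCast_mul (hpos m).le, mul_div_cancel₀ _ (by positivity),
      Real.rpow_natCast]
  exact hroot.trans ((hM.geomLE_pow_mul hd).trans hMN)

theorem stmt15_general (M N : ℕ → ℝ) (hMpos : ∀ j, 0 < M j) (hNpos : ∀ j, 0 < N j)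
    (hNmono : Monotone N)
    (hMmg : ∃ A : ℝ, 0 < A ∧ ∀ j k : ℕ, M (j + k) ≤ A ^ (j + k) * (M j * M k))
    (hMequiv : ∀ s : ℝ, 1 ≤ s → ∃ A₁ A₂ : ℝ, 0 < A₁ ∧ 0 < A₂ ∧
      ∀ j : ℕ, A₁ ^ (j + 1) * (M j) ^ s ≤ M ⌊s * j⌋₊ ∧
        M ⌊s * j⌋₊ ≤ A₂ ^ (j + 1) * (M j) ^ s)
    (d : ℕ) (hd : 2 ≤ d) (C : ℝ) (hC : 0 < C)
    (hMN : ∀ k : ℕ, M (d * k) ≤ C ^ (k + 1) * N (2 * k)) :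
    ∃ C₁ : ℝ, 0 < C₁ ∧ ∀ k : ℕ, C₁ ^ (k + 1) * (M k) ^ ((d : ℝ) / 2) ≤ N k := by
  have hodd : GeomLE (fun k => M k ^ ((d : ℝ) / 2)) (fun k => M (2 * (k / 2)) ^ ((d : ℝ) / 2)) :=
    (ModerateGrowth.geomLE_mul_div hMmg hMpos two_pos).rpow (fun k => (hMpos k).le)
      (by positivity)
  have heven : GeomLE (fun m => M (2 * m) ^ ((d : ℝ) / 2)) (fun m => N (2 * m)) := by
    exact_mod_cast FloorPowComparable.geomLE_rpow_of_geomLE_mul hMequiv hMpos one_le_two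
      (by omega) ⟨C, hC, hMN⟩
  have hevenFloor : GeomLE (fun k => M (2 * (k / 2)) ^ ((d : ℝ) / 2)) (fun k => N (2 * (k / 2))) :=
    heven.comp (fun m => (hNpos _).le) (fun k => Nat.div_le_self k 2)
  have hmono : GeomLE (fun k => N (2 * (k / 2))) N :=
    GeomLE.of_le fun k => hNmono (Nat.mul_div_le k 2)
  exact (hodd.trans (hevenFloor.trans hmono)).exists_mul_pow_le

theorem stmt15 (M N : ℕ → ℝ) (hMpos : ∀ j, 0 < M j) (hNpos : ∀ j, 0 < N j)
    (hN0 : N 0 = 1) (hNmono : Monotone N)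
    (hNlc : Monotone (fun j => N (j + 1) / N j))
    (hNmg : ∃ A : ℝ, 0 < A ∧ ∀ j k : ℕ, N (j + k) ≤ A ^ (j + k) * (N j * N k))
    (hMmg : ∃ A : ℝ, 0 < A ∧ ∀ j k : ℕ, M (j + k) ≤ A ^ (j + k) * (M j * M k))
    (hMequiv : ∀ s : ℝ, 1 ≤ s → ∃ A₁ A₂ : ℝ, 0 < A₁ ∧ 0 < A₂ ∧
      ∀ j : ℕ, A₁ ^ (j + 1) * (M j) ^ s ≤ M ⌊s * j⌋₊ ∧
        M ⌊s * j⌋₊ ≤ A₂ ^ (j + 1) * (M j) ^ s)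
    (d : ℕ) (hd : 2 ≤ d) (C : ℝ) (hC : 0 < C)
    (hMN : ∀ k : ℕ, M (d * k) ≤ C ^ (k + 1) * N (2 * k)) :
    ∃ C₁ : ℝ, 0 < C₁ ∧ ∀ k : ℕ, C₁ ^ (k + 1) * (M k) ^ ((d : ℝ) / 2) ≤ N k :=
  stmt15_general M N hMpos hNpos hNmono hMmg hMequiv d hd C hC hMN
end

section
/- For the polynomial P(x,t) = x² − 2tx + t² + t⁴ with t ∈ ℝ, the complex roots of P(·,t) are t + it² and t − it², and hence the root locus Γ = {t ± it² : t ∈ [−η, η]} satisfies: Γ and the real axis are 2-regularly separated but not 1-regularly separated near 0, i.e., there is C > 0 with d(x, Γ) ≥ C·|x|² for real x near 0, but no C > 0 with d(x, Γ) ≥ C·|x| for all real x near 0. -/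
/-!
The two roots of `P(·, t)` are `t ± i t²`, at real part `t` and imaginary part `± t²`.
A real point `x` is therefore at distance at least `max |x - t| (t²)` from each of them,
and one of `|x - t|`, `|t|` is at least `|x| / 2`; this gives the quadratic lower bound.
The point `x + i x²` of the arc lies at distance exactly `x²` from `x`, so no linear bound holds.
-/

open Complex Metric

def parabolaArcs (η : ℝ) : Set ℂ :=
  {z : ℂ | ∃ t : ℝ, |t| ≤ η ∧ (z = (t : ℂ) + I * (t : ℂ) ^ 2 ∨ z = (t : ℂ) - I * (t : ℂ) ^ 2)}

theorem sq_sub_two_mul_add_sq_add_pow_four_eq_zero_iff (t z : ℂ) :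
    z ^ 2 - 2 * t * z + t ^ 2 + t ^ 4 = 0 ↔ z = t + I * t ^ 2 ∨ z = t - I * t ^ 2 := by
  have hfactor : z ^ 2 - 2 * t * z + t ^ 2 + t ^ 4 = (z - (t + I * t ^ 2)) * (z - (t - I * t ^ 2)) := by
    linear_combination t ^ 4 * I_sq
  rw [hfactor, mul_eq_zero, sub_eq_zero, sub_eq_zero]

theorem max_abs_re_sub_abs_im_sub_le_dist (w z : ℂ) :
    max |w.re - z.re| |w.im - z.im| ≤ dist w z := by
  rw [dist_eq, ← sub_re, ← sub_im]
  exact max_le (abs_re_le_norm _) (abs_im_le_norm _)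

theorem sq_le_four_mul_max_abs_sub_sq {x : ℝ} (hx : |x| ≤ 1) (t : ℝ) :
    x ^ 2 ≤ 4 * max |x - t| (t ^ 2) := by
  have hsq : x ^ 2 ≤ |x| := by nlinarith [sq_abs x, abs_nonneg x]
  rcases le_or_gt (|x| / 2) |x - t| with hfar | hnear
  · linarith [le_max_left |x - t| (t ^ 2), abs_nonneg (x - t)]
  · have ht : |x| / 2 ≤ |t| := by linarith [abs_sub_abs_le_abs_sub x t]
    have : (|x| / 2) ^ 2 ≤ t ^ 2 := by
      rw [← sq_abs t]
      exact pow_le_pow_left₀ (by positivity) ht 2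
    nlinarith [sq_abs x, le_max_right |x - t| (t ^ 2)]

theorem sq_div_four_le_dist_of_mem_parabolaArcs {η x : ℝ} (hx : |x| ≤ 1) {z : ℂ}
    (hz : z ∈ parabolaArcs η) : x ^ 2 / 4 ≤ dist (x : ℂ) z := by
  obtain ⟨t, -, hzt⟩ := hz
  have hre : z.re = t := by rcases hzt with rfl | rfl <;> simp [← ofReal_pow]
  have him : |z.im| = t ^ 2 := by
    rcases hzt with rfl | rfl <;> simp [← ofReal_pow, abs_of_nonneg (sq_nonneg t)]
  have hdist := max_abs_re_sub_abs_im_sub_le_dist x z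
  rw [ofReal_re, ofReal_im, zero_sub, abs_neg, hre, him] at hdist
  linarith [sq_le_four_mul_max_abs_sub_sq hx t]

theorem sq_div_four_le_infDist_parabolaArcs {η x : ℝ} (hη : 0 ≤ η) (hx : |x| ≤ 1) :
    x ^ 2 / 4 ≤ infDist (x : ℂ) (parabolaArcs η) := by
  have hne : (parabolaArcs η).Nonempty := ⟨0, 0, by simpa using hη⟩
  exact (le_infDist hne).2 fun _ hz => sq_div_four_le_dist_of_mem_parabolaArcs hx hz

theorem infDist_parabolaArcs_le_sq {η x : ℝ} (hx : |x| ≤ η) :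
    infDist (x : ℂ) (parabolaArcs η) ≤ x ^ 2 := by
  have hmem : (x : ℂ) + I * (x : ℂ) ^ 2 ∈ parabolaArcs η := ⟨x, hx, Or.inl rfl⟩
  have hdist : dist (x : ℂ) (x + I * (x : ℂ) ^ 2) = x ^ 2 := by
    rw [dist_eq, sub_add_cancel_left, norm_neg, norm_mul, norm_I, one_mul, ← ofReal_pow,
      norm_real, Real.norm_of_nonneg (sq_nonneg x)]
  exact hdist ▸ infDist_le_dist_of_mem hmem

theorem not_exists_linear_lower_bound_of_le_sq {η : ℝ} (hη : 0 < η) {f : ℝ → ℝ}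
    (hf : ∀ x, |x| ≤ η → f x ≤ x ^ 2) :
    ¬ ∃ C : ℝ, 0 < C ∧ ∀ x : ℝ, |x| ≤ η → C * |x| ≤ f x := by
  rintro ⟨C, hC, hCf⟩
  set x := min η (C / 2)
  have hx : 0 < x := lt_min hη (half_pos hC)
  have hxη : |x| ≤ η := (abs_of_pos hx).trans_le (min_le_left _ _)
  have hCx : C * x ≤ x ^ 2 := by simpa [abs_of_pos hx] using (hCf x hxη).trans (hf x hxη)
  have : C ≤ x := by nlinarith
  linarith [min_le_right η (C / 2)]

theorem stmt17 (η : ℝ) (hη : 0 < η) (hη1 : η ≤ 1)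
    (Γ : Set ℂ)
    (hΓ : Γ = {z : ℂ | ∃ t : ℝ, |t| ≤ η ∧
      (z = (t : ℂ) + Complex.I * (t : ℂ) ^ 2 ∨ z = (t : ℂ) - Complex.I * (t : ℂ) ^ 2)}) :
    (∀ t : ℝ, ∀ z : ℂ,
      z ^ 2 - 2 * (t : ℂ) * z + (t : ℂ) ^ 2 + (t : ℂ) ^ 4 = 0 ↔
        (z = (t : ℂ) + Complex.I * (t : ℂ) ^ 2 ∨ z = (t : ℂ) - Complex.I * (t : ℂ) ^ 2)) ∧
    (∃ C : ℝ, 0 < C ∧ ∀ x : ℝ, |x| ≤ η → C * x ^ 2 ≤ Metric.infDist (x : ℂ) Γ) ∧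
    ¬ (∃ C : ℝ, 0 < C ∧ ∀ x : ℝ, |x| ≤ η → C * |x| ≤ Metric.infDist (x : ℂ) Γ) := by
  change Γ = parabolaArcs η at hΓ
  subst hΓ
  refine ⟨fun t z => sq_sub_two_mul_add_sq_add_pow_four_eq_zero_iff t z, ⟨1 / 4, by norm_num, ?_⟩,
    not_exists_linear_lower_bound_of_le_sq hη fun x hx => infDist_parabolaArcs_le_sq hx⟩
  intro x hx
  linarith [sq_div_four_le_infDist_parabolaArcs (x := x) hη.le (hx.trans hη1)]
end
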